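/- Let G be a minimally rigid graph and v a vertex of type 2. If v is changed to a type 1 vertex, the resulting graph is rigid (contains a spanning minimally rigid subgraph). -/

import Mathlib

/-!
Call a vertex set critical if it contains `v`, has at least three type-1 vertices and is tight.
Changing `v` to type 1 lowers the sparsity bound by one on the sets containing `v` with at least
three type-1 vertices and leaves it unchanged elsewhere. If `G` has at most two type-1 vertices,
`G` itself therefore stays minimally rigid. Otherwise the whole vertex set is critical; as
`edgesIn` is supermodular and `n₁ + 2 n₂` is modular, critical sets are closed under intersection,
so there is a least one, and deleting an edge inside it leaves a minimally rigid spanning subgraph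
for the new types.
-/

open SimpleGraph

variable {V : Type*}

/-- Number of type-1 vertices in a vertex set. -/
noncomputable def n1 (t1 : V → Prop) (S : Set V) : ℕ := {v ∈ S | t1 v}.ncard

/-- Number of type-2 vertices in a vertex set. -/
noncomputable def n2 (t1 : V → Prop) (S : Set V) : ℕ := {v ∈ S | ¬ t1 v}.ncard

/-- Number of edges of `G` with both endpoints in `S`. -/
noncomputable def edgesIn (G : SimpleGraph V) (S : Set V) : ℕ :=
  {e ∈ G.edgeSet | ∀ v ∈ e, v ∈ S}.ncard

/-- Sparsity: every subgraph on `n' ≥ 2` vertices has at most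
`n₁' + 2 n₂' + min 0 (n₁' - 3)` edges. -/
def Sparse (G : SimpleGraph V) (t1 : V → Prop) : Prop :=
  ∀ S : Set V, 2 ≤ S.ncard →
    (edgesIn G S : ℤ) ≤ (n1 t1 S : ℤ) + 2 * n2 t1 S + min 0 ((n1 t1 S : ℤ) - 3)

/-- Minimal rigidity: either one vertex, or sparse with exactly
`n₁ + 2 n₂ + min 0 (n₁ - 3)` edges. -/
def MinRigid (G : SimpleGraph V) (t1 : V → Prop) : Prop :=
  Nat.card V = 1 ∨
    (Sparse G t1 ∧
      (G.edgeSet.ncard : ℤ) = (n1 t1 Set.univ : ℤ) + 2 * n2 t1 Set.univ +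
        min 0 ((n1 t1 Set.univ : ℤ) - 3))

/-- Rigidity: contains a spanning minimally rigid subgraph. -/
def Rigid (G : SimpleGraph V) (t1 : V → Prop) : Prop :=
  ∃ H : SimpleGraph V, H ≤ G ∧ MinRigid H t1

/-- A rigid block: a vertex-induced rigid subgraph, identified with its vertex set. -/
def RigidBlock (G : SimpleGraph V) (t1 : V → Prop) (S : Set V) : Prop :=
  Rigid (G.induce S) (fun v => t1 ↑v)

noncomputable def sparsityBound (t1 : V → Prop) (S : Set V) : ℤ :=
  (n1 t1 S : ℤ) + 2 * n2 t1 S + min 0 ((n1 t1 S : ℤ) - 3)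

def IsTight (G : SimpleGraph V) (t1 : V → Prop) (S : Set V) : Prop :=
  (edgesIn G S : ℤ) = sparsityBound t1 S

lemma edgesIn_univ (G : SimpleGraph V) : edgesIn G Set.univ = G.edgeSet.ncard := by
  simp [edgesIn]

lemma minRigid_of_sparse_of_isTight_univ {G : SimpleGraph V} {t1 : V → Prop}
    (hsp : Sparse G t1) (huniv : IsTight G t1 Set.univ) : MinRigid G t1 :=
  Or.inr ⟨hsp, by rw [← edgesIn_univ]; exact huniv⟩

lemma InfClosed.exists_isLeast {α : Type*} [SemilatticeInf α] [WellFoundedLT α] {s : Set α}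
    (hs : InfClosed s) (hne : s.Nonempty) : ∃ a, IsLeast s a := by
  obtain ⟨a, ha⟩ := exists_minimal_of_wellFoundedLT (· ∈ s) hne
  exact ⟨a, ha.prop, fun b hb => (ha.eq_of_le (hs ha.prop hb) inf_le_left) ▸ inf_le_right⟩

section Counting

variable [Finite V] {t1 : V → Prop} {S T : Set V}

lemma ncard_sep_inter_add_ncard_sep_union (p : V → Prop) (S T : Set V) :
    {w ∈ S ∩ T | p w}.ncard + {w ∈ S ∪ T | p w}.ncard
      = {w ∈ S | p w}.ncard + {w ∈ T | p w}.ncard := by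
  have := Set.ncard_inter_add_ncard_union {w ∈ S | p w} {w ∈ T | p w}
  rwa [← Set.sep_inter, ← Set.sep_union] at this

lemma n1_inter_add_n1_union (t1 : V → Prop) (S T : Set V) :
    n1 t1 (S ∩ T) + n1 t1 (S ∪ T) = n1 t1 S + n1 t1 T :=
  ncard_sep_inter_add_ncard_sep_union t1 S T

lemma n2_inter_add_n2_union (t1 : V → Prop) (S T : Set V) :
    n2 t1 (S ∩ T) + n2 t1 (S ∪ T) = n2 t1 S + n2 t1 T :=
  ncard_sep_inter_add_ncard_sep_union (fun w => ¬ t1 w) S T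

lemma n1_mono (t1 : V → Prop) (h : S ⊆ T) : n1 t1 S ≤ n1 t1 T :=
  Set.ncard_le_ncard fun _ hw => ⟨h hw.1, hw.2⟩

lemma n1_add_n2 (t1 : V → Prop) (S : Set V) : n1 t1 S + n2 t1 S = S.ncard := by
  rw [n1, n2, ← Set.sdiff_sep_self, add_comm,
    Set.ncard_sdiff_add_ncard_of_subset (Set.sep_subset _ _)]

lemma n1_retype_of_mem {v : V} (hv : ¬ t1 v) (hvS : v ∈ S) :
    n1 (fun w => t1 w ∨ w = v) S = n1 t1 S + 1 := by
  have : {w ∈ S | t1 w ∨ w = v} = insert v {w ∈ S | t1 w} := by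
    ext w
    by_cases hw : w = v
    · subst hw; simp [hvS]
    · simp [hw]
  rw [n1, n1, this, Set.ncard_insert_of_notMem (by simp [hv])]

omit [Finite V] in
lemma n1_retype_of_notMem {v : V} (hvS : v ∉ S) :
    n1 (fun w => t1 w ∨ w = v) S = n1 t1 S := by
  have : {w ∈ S | t1 w ∨ w = v} = {w ∈ S | t1 w} := by
    ext w
    by_cases hw : w = v
    · subst hw; simp [hvS]
    · simp [hw]
  rw [n1, n1, this]

open Classical in
/-- Where the `if` does not fire, the `min 0 (n₁ - 3)` term absorbs the change of types. -/
lemma sparsityBound_retype {v : V} (hv : ¬ t1 v) (S : Set V) :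
    sparsityBound (fun w => t1 w ∨ w = v) S
      = sparsityBound t1 S - if v ∈ S ∧ 3 ≤ n1 t1 S then 1 else 0 := by
  have h := n1_add_n2 t1 S
  have h' := n1_add_n2 (fun w => t1 w ∨ w = v) S
  unfold sparsityBound
  by_cases hvS : v ∈ S
  · have := n1_retype_of_mem hv hvS
    by_cases h3 : 3 ≤ n1 t1 S
    · rw [if_pos ⟨hvS, h3⟩]
      omega
    · rw [if_neg fun h => h3 h.2]
      omega
  · have := n1_retype_of_notMem (t1 := t1) hvS
    rw [if_neg fun h => hvS h.1]
    omega

end Counting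

section Edges

variable [Finite V] {G H : SimpleGraph V} {S T : Set V}

lemma edgesIn_mono_left (h : H ≤ G) (S : Set V) : edgesIn H S ≤ edgesIn G S :=
  Set.ncard_le_ncard fun _ he => ⟨edgeSet_mono h he.1, he.2⟩

lemma edgesIn_add_edgesIn_le (G : SimpleGraph V) (S T : Set V) :
    edgesIn G S + edgesIn G T ≤ edgesIn G (S ∩ T) + edgesIn G (S ∪ T) := by
  have hinter : {e ∈ G.edgeSet | ∀ w ∈ e, w ∈ S ∩ T}
      = {e ∈ G.edgeSet | ∀ w ∈ e, w ∈ S} ∩ {e ∈ G.edgeSet | ∀ w ∈ e, w ∈ T} := by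
    ext e
    simp only [Set.mem_sep_iff, Set.mem_inter_iff]
    grind
  have hunion : {e ∈ G.edgeSet | ∀ w ∈ e, w ∈ S} ∪ {e ∈ G.edgeSet | ∀ w ∈ e, w ∈ T}
      ⊆ {e ∈ G.edgeSet | ∀ w ∈ e, w ∈ S ∪ T} := by
    rintro e (⟨he, hS⟩ | ⟨he, hT⟩)
    · exact ⟨he, fun w hw => Or.inl (hS w hw)⟩
    · exact ⟨he, fun w hw => Or.inr (hT w hw)⟩
  rw [edgesIn, edgesIn, ← Set.ncard_inter_add_ncard_union, edgesIn, edgesIn, hinter]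
  exact Nat.add_le_add_left (Set.ncard_le_ncard hunion) _

lemma edgesIn_eq_zero_of_ncard_le_one (G : SimpleGraph V) (h : S.ncard ≤ 1) :
    edgesIn G S = 0 := by
  rw [edgesIn, Set.ncard_eq_zero, Set.eq_empty_iff_forall_notMem]
  rintro e ⟨he, heS⟩
  induction e using Sym2.ind with
  | _ a b =>
    exact G.ne_of_adj he <| (Set.ncard_le_one (Set.toFinite S)).mp h
      a (heS a (Sym2.mem_mk_left a b)) b (heS b (Sym2.mem_mk_right a b))

lemma edgesIn_deleteEdges_add_one {e : Sym2 V} (he : e ∈ G.edgeSet) (heS : ∀ w ∈ e, w ∈ S) :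
    edgesIn (G.deleteEdges {e}) S + 1 = edgesIn G S := by
  have : {x ∈ (G.deleteEdges {e}).edgeSet | ∀ w ∈ x, w ∈ S}
      = {x ∈ G.edgeSet | ∀ w ∈ x, w ∈ S} \ {e} := by
    ext x
    simp only [edgeSet_deleteEdges, Set.mem_ofPred_eq, Set.mem_sdiff]
    tauto
  rw [edgesIn, edgesIn, this, Set.ncard_sdiff_singleton_add_one
    (show e ∈ {x ∈ G.edgeSet | ∀ w ∈ x, w ∈ S} from ⟨he, heS⟩)]

end Edges

section Tight

variable [Finite V] {G H : SimpleGraph V} {t1 : V → Prop} {S T : Set V} {v : V}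

/-- Supermodularity of `edgesIn` against modularity of `n₁ + 2 n₂`; the intersection cannot be a
singleton, which has no edges but `n₁ + 2 n₂ ≥ 1`. -/
lemma IsTight.inter (hsp : Sparse G t1) (hS : IsTight G t1 S) (hT : IsTight G t1 T)
    (hS3 : 3 ≤ n1 t1 S) (hT3 : 3 ≤ n1 t1 T) (hST : (S ∩ T).Nonempty) :
    IsTight G t1 (S ∩ T) ∧ 3 ≤ n1 t1 (S ∩ T) := by
  have hsup := edgesIn_add_edgesIn_le G S T
  have h1 := n1_inter_add_n1_union t1 S T
  have h2 := n2_inter_add_n2_union t1 S T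
  have hU3 : 3 ≤ n1 t1 (S ∪ T) := hS3.trans (n1_mono t1 Set.subset_union_left)
  have hU : edgesIn G (S ∪ T) ≤ sparsityBound t1 (S ∪ T) :=
    hsp _ (by have := n1_add_n2 t1 (S ∪ T); omega)
  unfold IsTight sparsityBound at hS hT hU ⊢
  have hlow : (n1 t1 (S ∩ T) : ℤ) + 2 * n2 t1 (S ∩ T) ≤ edgesIn G (S ∩ T) := by omega
  have hcard : 2 ≤ (S ∩ T).ncard := by
    by_contra! hcard
    have := n1_add_n2 t1 (S ∩ T)
    have := (Set.ncard_pos (Set.toFinite _)).mpr hST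
    rw [edgesIn_eq_zero_of_ncard_le_one G (by omega)] at hlow
    omega
  have hI := hsp _ hcard
  omega

lemma Sparse.exists_edge_subset_isTight (hsp : Sparse G t1) (huniv : IsTight G t1 Set.univ)
    (h3 : 3 ≤ n1 t1 Set.univ) (v : V) :
    ∃ e ∈ G.edgeSet, ∀ S, v ∈ S → 3 ≤ n1 t1 S → IsTight G t1 S → ∀ w ∈ e, w ∈ S := by
  have hclosed : InfClosed {S | v ∈ S ∧ 3 ≤ n1 t1 S ∧ IsTight G t1 S} :=
    fun S ⟨hvS, hS3, hS⟩ T ⟨hvT, hT3, hT⟩ =>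
      ⟨⟨hvS, hvT⟩, (hS.inter hsp hT hS3 hT3 ⟨v, hvS, hvT⟩).symm⟩
  obtain ⟨S₀, ⟨-, hS₀3, hS₀⟩, hleast⟩ :=
    hclosed.exists_isLeast ⟨Set.univ, Set.mem_univ v, h3, huniv⟩
  have hpos : 0 < edgesIn G S₀ := by
    unfold IsTight sparsityBound at hS₀
    omega
  obtain ⟨e, he, heS₀⟩ := (Set.ncard_pos (Set.toFinite _)).mp hpos
  exact ⟨e, he, fun S hvS hS3 hS w hw => hleast ⟨hvS, hS3, hS⟩ (heS₀ w hw)⟩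

lemma Sparse.retype_of_le (hsp : Sparse G t1) (hv : ¬ t1 v) (hHG : H ≤ G)
    (hH : ∀ S, v ∈ S → 3 ≤ n1 t1 S → IsTight G t1 S → edgesIn H S < edgesIn G S) :
    Sparse H (fun w => t1 w ∨ w = v) := by
  intro S hS
  have hG : edgesIn G S ≤ sparsityBound t1 S := hsp S hS
  have hmono := edgesIn_mono_left hHG S
  show (edgesIn H S : ℤ) ≤ sparsityBound _ S
  rw [sparsityBound_retype hv]
  split_ifs with hcrit
  · by_cases htight : IsTight G t1 S
    · have := hH S hcrit.1 hcrit.2 htight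
      omega
    · unfold IsTight at htight
      omega
  · omega

end Tight

/-- If `G` is minimally rigid and `v` is a type-2 vertex, changing `v` to
type 1 keeps the graph rigid. -/
theorem stmt7 {V : Type*} [Fintype V] (G : SimpleGraph V) (t1 : V → Prop)
    (v : V) (hv : ¬ t1 v) (h : MinRigid G t1) :
    Rigid G (fun w => t1 w ∨ w = v) := by
  rcases h with hone | ⟨hsp, hcount⟩
  · exact ⟨G, le_rfl, Or.inl hone⟩
  have huniv : IsTight G t1 Set.univ := by rw [IsTight, edgesIn_univ]; exact hcount
  have hbound := sparsityBound_retype hv Set.univ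
  by_cases h3 : 3 ≤ n1 t1 Set.univ
  · obtain ⟨e, he, heS⟩ := hsp.exists_edge_subset_isTight huniv h3 v
    have hdel : ∀ S, v ∈ S → 3 ≤ n1 t1 S → IsTight G t1 S →
        edgesIn (G.deleteEdges {e}) S + 1 = edgesIn G S :=
      fun S hvS hS3 hS => edgesIn_deleteEdges_add_one he (heS S hvS hS3 hS)
    refine ⟨G.deleteEdges {e}, G.deleteEdges_le _, minRigid_of_sparse_of_isTight_univ
      (hsp.retype_of_le hv (G.deleteEdges_le _) fun S hvS hS3 hS => ?_) ?_⟩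
    · have := hdel S hvS hS3 hS
      omega
    · have := hdel Set.univ (Set.mem_univ v) h3 huniv
      rw [if_pos ⟨Set.mem_univ v, h3⟩] at hbound
      unfold IsTight at huniv ⊢
      omega
  · refine ⟨G, le_rfl, minRigid_of_sparse_of_isTight_univ (hsp.retype_of_le hv le_rfl
      fun S _ hS3 _ => absurd (hS3.trans (n1_mono t1 (Set.subset_univ S))) h3) ?_⟩
    rw [if_neg fun h => h3 h.2, sub_zero] at hbound
    rw [IsTight, hbound]
    exact huniv
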